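/- Let m be odd and q = 2^m, and fix t ∈ F_q with t ≠ 1. Define D(Y,Z) = Y⁴ + t²(1+t+t²)Y² + (1+t)(1+t+t²)²Y + t²Z⁴ + (1+t+t²)Z² + (1+t)(1+t+t²)²Z + (1+t+t²)³. Then D(Y,Z) ≠ 0 for all Y, Z ∈ F_q. -/

import Mathlib

/-!
In characteristic 2, with `c = (1 + t)(1 + t + t²)` and
`N = (Y + Z)² + (Y + Z)(1 + t + t²) + (1 + t + t²) + (1 + t)Z²`,
the polynomial `D(Y, Z)` equals the norm form `N² + Nc + c²`. When `m` is odd, `3 ∤ 2^m - 1`,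
so `F` has no primitive cube root of unity and `x² + x + 1` has no root in `F`; as `c ≠ 0`
for `t ≠ 1`, the norm form cannot vanish.
-/

lemma Nat.not_three_dvd_two_pow_sub_one {m : ℕ} (hm : Odd m) : ¬ 3 ∣ 2 ^ m - 1 := by
  obtain ⟨k, rfl⟩ := hm
  have hmod : 2 ^ (2 * k + 1) % 3 = 2 := by
    rw [pow_succ, pow_mul, Nat.mul_mod, Nat.pow_mod]
    norm_num
  have hpos : 0 < 2 ^ (2 * k + 1) := by positivity
  generalize 2 ^ (2 * k + 1) = n at *
  omega

namespace FiniteField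

variable {F : Type*} [Field F] [Fintype F]

lemma eq_one_of_pow_three_eq_one (hF : ¬ 3 ∣ Fintype.card F - 1) {x : F} (hx : x ^ 3 = 1) :
    x = 1 := by
  have hx0 : x ≠ 0 := by rintro rfl; simp at hx
  have hcop : Nat.Coprime 3 (Fintype.card F - 1) := (Nat.prime_three.coprime_iff_not_dvd).2 hF
  exact (pow_eq_one_iff_of_coprime hcop).1 ⟨hx, pow_card_sub_one_eq_one x hx0⟩

lemma sq_add_self_add_one_ne_zero (hF : ¬ 3 ∣ Fintype.card F - 1) (h3 : (3 : F) ≠ 0) (x : F) :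
    x ^ 2 + x + 1 ≠ 0 := by
  intro hx
  have hx1 : x = 1 := eq_one_of_pow_three_eq_one hF (by linear_combination (x - 1) * hx)
  exact h3 (by rw [hx1] at hx; linear_combination hx)

end FiniteField

lemma sq_add_mul_add_sq_ne_zero {F : Type*} [Field F] (h : ∀ x : F, x ^ 2 + x + 1 ≠ 0)
    {a b : F} (hb : b ≠ 0) : a ^ 2 + a * b + b ^ 2 ≠ 0 := by
  intro hab
  apply h (a / b)
  field_simp
  linear_combination hab

lemma quartic_eq_sq_add_mul_add_sq {R : Type*} [CommRing R] [CharP R 2] (t Y Z : R) :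
    Y ^ 4 + t ^ 2 * (1 + t + t ^ 2) * Y ^ 2 + (1 + t) * (1 + t + t ^ 2) ^ 2 * Y
        + t ^ 2 * Z ^ 4 + (1 + t + t ^ 2) * Z ^ 2
        + (1 + t) * (1 + t + t ^ 2) ^ 2 * Z + (1 + t + t ^ 2) ^ 3
      = ((Y + Z) ^ 2 + (Y + Z) * (1 + t + t ^ 2) + (1 + t + t ^ 2) + (1 + t) * Z ^ 2) ^ 2
        + ((Y + Z) ^ 2 + (Y + Z) * (1 + t + t ^ 2) + (1 + t + t ^ 2) + (1 + t) * Z ^ 2)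
          * ((1 + t) * (1 + t + t ^ 2))
        + ((1 + t) * (1 + t + t ^ 2)) ^ 2 := by
  rw [← sub_eq_zero]
  ring_nf
  reduce_mod_char!

theorem stmt_16 (m : ℕ) (hm : Odd m) {F : Type*} [Field F] [Fintype F]
    (hF : Fintype.card F = 2 ^ m) (t : F) (ht : t ≠ 1) :
    ∀ Y Z : F,
      Y ^ 4 + t ^ 2 * (1 + t + t ^ 2) * Y ^ 2 + (1 + t) * (1 + t + t ^ 2) ^ 2 * Y
        + t ^ 2 * Z ^ 4 + (1 + t + t ^ 2) * Z ^ 2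
        + (1 + t) * (1 + t + t ^ 2) ^ 2 * Z + (1 + t + t ^ 2) ^ 3 ≠ 0 := by
  intro Y Z
  have h2 : (2 : F) = 0 := by
    simpa [hF, hm.pos.ne'] using FiniteField.cast_card_eq_zero F
  have : CharP F 2 := CharTwo.of_one_ne_zero_of_two_eq_zero one_ne_zero h2
  have hroot : ∀ x : F, x ^ 2 + x + 1 ≠ 0 :=
    FiniteField.sq_add_self_add_one_ne_zero (hF ▸ Nat.not_three_dvd_two_pow_sub_one hm)
      (by rw [show (3 : F) = 1 by linear_combination h2]; exact one_ne_zero)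
  have hc : (1 + t) * (1 + t + t ^ 2) ≠ 0 := by
    refine mul_ne_zero (fun h => ht ?_) (fun h => hroot t (by linear_combination h))
    linear_combination h - h2
  rw [quartic_eq_sq_add_mul_add_sq]
  exact sq_add_mul_add_sq_ne_zero hroot hc
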